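/- arXiv:nlin/0606059 — 2 statements merged into one kernel-verified Lean document; each statement's English description precedes it below -/
import Mathlib

section
/- Let τ satisfy Fay-like identity (A), and for nonzero λ, μ define the twisted difference operator (X_{μ,λ}f)(s,x,y) := f(s,x,y) − (1−λ/μ)·f(s, x−ℏ[μ⁻¹], y) acting on functions of (s,x,y). Then the twice-iterated operator applied to 𝗌w⁺ satisfies: X_{μ,λ}(X_{μ,λ}𝗌w⁺)(s,x,y;λ) = q₂,₁(s,x,y)·λ·𝗌w⁺(s+ℏ, x, y; λ) + q₂,₂(s,x,y)·λ²·𝗌w⁺(s+2ℏ, x, y; λ), where q₂,₁(s,x,y) = v⁺(s,x,y;μ) − v⁺(s, x−ℏ[μ⁻¹], y; μ) and q₂,₂(s,x,y) = v⁺(s, x−ℏ[μ⁻¹], y; μ)·v⁺(s+ℏ, x, y; μ). -/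
noncomputable section

/-- `shift ℏ x μ` is the sequence `x − ℏ[μ]`, where `[μ]ₙ = μⁿ/n`. -/
def shift (h : ℂ) (x : ℕ+ → ℂ) (μ : ℂ) : ℕ+ → ℂ :=
  fun n => x n - h * (μ ^ (n : ℕ) / (n : ℂ))

/-- Fay-like identity (A). -/
def FayA (h : ℂ) (τ : ℂ → (ℕ+ → ℂ) → (ℕ+ → ℂ) → ℂ) : Prop :=
  ∀ (s : ℂ) (x y : ℕ+ → ℂ) (μ₁ μ₂ : ℂ), μ₁ ≠ 0 → μ₂ ≠ 0 →
    μ₂ * τ s (shift h x μ₁⁻¹) y * τ (s + h) (shift h x μ₂⁻¹) y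
      - μ₁ * τ s (shift h x μ₂⁻¹) y * τ (s + h) (shift h x μ₁⁻¹) y
    = (μ₂ - μ₁) * τ (s + h) x y * τ s (shift h (shift h x μ₁⁻¹) μ₂⁻¹) y

/-- Fay-like identity (B). -/
def FayB (h : ℂ) (τ : ℂ → (ℕ+ → ℂ) → (ℕ+ → ℂ) → ℂ) : Prop :=
  ∀ (s : ℂ) (x y : ℕ+ → ℂ) (ν₁ ν₂ : ℂ), ν₁ ≠ 0 → ν₂ ≠ 0 →
    (ν₁ - ν₂) * τ s x y * τ (s + h) x (shift h (shift h y ν₁) ν₂)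
    = ν₁ * τ (s + h) x (shift h y ν₁) * τ s x (shift h y ν₂)
      - ν₂ * τ (s + h) x (shift h y ν₂) * τ s x (shift h y ν₁)

/-- Fay-like identity (C). -/
def FayC (h : ℂ) (τ : ℂ → (ℕ+ → ℂ) → (ℕ+ → ℂ) → ℂ) : Prop :=
  ∀ (s : ℂ) (x y : ℕ+ → ℂ) (μ ν : ℂ), μ ≠ 0 → ν ≠ 0 →
    μ * (τ s (shift h x μ⁻¹) y * τ s x (shift h y ν)
          - τ s x y * τ s (shift h x μ⁻¹) (shift h y ν))
    = ν * τ (s + h) x (shift h y ν) * τ (s - h) (shift h x μ⁻¹) y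

/-- `𝗌w⁺(s,x,y;λ) = τ(s; x−ℏ[λ⁻¹], y)/τ(s+ℏ; x, y)`. -/
def swp (h : ℂ) (τ : ℂ → (ℕ+ → ℂ) → (ℕ+ → ℂ) → ℂ)
    (s : ℂ) (x y : ℕ+ → ℂ) (lam : ℂ) : ℂ :=
  τ s (shift h x lam⁻¹) y / τ (s + h) x y

/-- `𝘄⁻(s,x,y;λ) = τ(s+ℏ; x, y−ℏ[λ])/τ(s+ℏ; x, y)`. -/
def swm (h : ℂ) (τ : ℂ → (ℕ+ → ℂ) → (ℕ+ → ℂ) → ℂ)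
    (s : ℂ) (x y : ℕ+ → ℂ) (lam : ℂ) : ℂ :=
  τ (s + h) x (shift h y lam) / τ (s + h) x y

/-- `w̃⁺(s,x,y;λ) = τ(s; x−ℏ[λ⁻¹], y)/τ(s; x, y)`. -/
def wtp (h : ℂ) (τ : ℂ → (ℕ+ → ℂ) → (ℕ+ → ℂ) → ℂ)
    (s : ℂ) (x y : ℕ+ → ℂ) (lam : ℂ) : ℂ :=
  τ s (shift h x lam⁻¹) y / τ s x y

/-- `w̃⁻(s,x,y;λ) = τ(s+ℏ; x, y−ℏ[λ])/τ(s; x, y)`. -/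
def wtm (h : ℂ) (τ : ℂ → (ℕ+ → ℂ) → (ℕ+ → ℂ) → ℂ)
    (s : ℂ) (x y : ℕ+ → ℂ) (lam : ℂ) : ℂ :=
  τ (s + h) x (shift h y lam) / τ s x y

/-- `v⁺(s,x,y;μ)`. -/
def vp (h : ℂ) (τ : ℂ → (ℕ+ → ℂ) → (ℕ+ → ℂ) → ℂ)
    (s : ℂ) (x y : ℕ+ → ℂ) (μ : ℂ) : ℂ :=
  μ⁻¹ * τ s (shift h x μ⁻¹) y * τ (s + 2 * h) x y
    / (τ (s + h) x y * τ (s + h) (shift h x μ⁻¹) y)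

/-- `v⁻(s,x,y;ν)`. -/
def vm (h : ℂ) (τ : ℂ → (ℕ+ → ℂ) → (ℕ+ → ℂ) → ℂ)
    (s : ℂ) (x y : ℕ+ → ℂ) (ν : ℂ) : ℂ :=
  ν * τ (s + h) x (shift h y ν) * τ (s - h) x y
    / (τ s x y * τ s x (shift h y ν))

/-- The twisted difference operator `X_{μ,λ}`. -/
def Xtw (h μ lam : ℂ) (f : ℂ → (ℕ+ → ℂ) → (ℕ+ → ℂ) → ℂ) :
    ℂ → (ℕ+ → ℂ) → (ℕ+ → ℂ) → ℂ :=
  fun s x y => f s x y - (1 - lam / μ) * f s (shift h x μ⁻¹) y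

/-!
Fay's identity (A) with `μ₁ = λ`, `μ₂ = μ` is, after clearing denominators, exactly the first-order
relation `X_{μ,λ} 𝗌w⁺(s) = λ v⁺(s; μ) 𝗌w⁺(s+ℏ)`. Applying `X_{μ,λ}` once more and using
the same relation at `s + ℏ` to eliminate the shifted `𝗌w⁺(s+ℏ; x−ℏ[μ⁻¹])` gives the second-order formula.
-/

lemma shift_shift_comm (h : ℂ) (x : ℕ+ → ℂ) (a b : ℂ) :
    shift h (shift h x a) b = shift h (shift h x b) a := by
  funext n
  simp only [shift]
  ring

lemma Xtw_swp_eq_vp_mul_swp {h : ℂ} {τ : ℂ → (ℕ+ → ℂ) → (ℕ+ → ℂ) → ℂ}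
    (hτ : ∀ s x y, τ s x y ≠ 0) (hA : FayA h τ) {lam μ : ℂ} (hlam : lam ≠ 0) (hμ : μ ≠ 0)
    (s : ℂ) (x y : ℕ+ → ℂ) :
    Xtw h μ lam (fun s x y => swp h τ s x y lam) s x y
      = vp h τ s x y μ * lam * swp h τ (s + h) x y lam := by
  have fay := hA s x y lam μ hlam hμ
  rw [shift_shift_comm] at fay
  have hs : s + h + h = s + 2 * h := by ring
  simp only [Xtw, swp, vp, hs]
  have := hτ (s + h) x y
  have := hτ (s + h) (shift h x μ⁻¹) y
  have := hτ (s + 2 * h) x y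
  -- keep `field_simp` from rewriting the inverses inside the arguments of `τ`
  generalize τ s (shift h x lam⁻¹) y = a, τ (s + h) x y = b, τ s (shift h x μ⁻¹) y = c,
    τ (s + h) (shift h x lam⁻¹) y = d, τ (s + h) (shift h x μ⁻¹) y = e,
    τ s (shift h (shift h x μ⁻¹) lam⁻¹) y = f, τ (s + 2 * h) x y = g at *
  field_simp
  linear_combination fay

theorem fay_A_implies_iterated_X_squared_general
    (h : ℂ)
    (τ : ℂ → (ℕ+ → ℂ) → (ℕ+ → ℂ) → ℂ) (hτ : ∀ s x y, τ s x y ≠ 0)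
    (hA : FayA h τ)
    (s : ℂ) (x y : ℕ+ → ℂ) (lam μ : ℂ) (hlam : lam ≠ 0) (hμ : μ ≠ 0) :
    Xtw h μ lam (Xtw h μ lam (fun s x y => swp h τ s x y lam)) s x y
      = (vp h τ s x y μ - vp h τ s (shift h x μ⁻¹) y μ)
          * lam * swp h τ (s + h) x y lam
        + (vp h τ s (shift h x μ⁻¹) y μ * vp h τ (s + h) x y μ)
          * lam ^ 2 * swp h τ (s + 2 * h) x y lam := by
  have first_order : Xtw h μ lam (fun s x y => swp h τ s x y lam)
      = fun s x y => vp h τ s x y μ * lam * swp h τ (s + h) x y lam :=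
    funext₃ (Xtw_swp_eq_vp_mul_swp hτ hA hlam hμ)
  have first_order_at_succ := Xtw_swp_eq_vp_mul_swp hτ hA hlam hμ (s + h) x y
  rw [add_assoc, ← two_mul] at first_order_at_succ
  rw [first_order]
  simp only [Xtw] at first_order_at_succ ⊢
  linear_combination vp h τ s (shift h x μ⁻¹) y μ * lam * first_order_at_succ

/-- The twice-iterated twisted difference operator applied to `𝗌w⁺`. -/
theorem fay_A_implies_iterated_X_squared
    (h : ℂ) (hh : h ≠ 0)
    (τ : ℂ → (ℕ+ → ℂ) → (ℕ+ → ℂ) → ℂ) (hτ : ∀ s x y, τ s x y ≠ 0)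
    (hA : FayA h τ)
    (s : ℂ) (x y : ℕ+ → ℂ) (lam μ : ℂ) (hlam : lam ≠ 0) (hμ : μ ≠ 0) :
    Xtw h μ lam (Xtw h μ lam (fun s x y => swp h τ s x y lam)) s x y
      = (vp h τ s x y μ - vp h τ s (shift h x μ⁻¹) y μ)
          * lam * swp h τ (s + h) x y lam
        + (vp h τ s (shift h x μ⁻¹) y μ * vp h τ (s + h) x y μ)
          * lam ^ 2 * swp h τ (s + 2 * h) x y lam :=
  fay_A_implies_iterated_X_squared_general h τ hτ hA s x y lam μ hlam hμ
end
end

section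
/- Let τ satisfy Fay-like identities (B) and (C). Fix a nonzero complex number ν and define, for nonzero λ, the untwisted difference operator (Y_ν g)(s,x,y) := g(s,x,y) − g(s, x, y−ℏ[ν]) and the twisted difference operator (Y_{ν,λ}f)(s,x,y) := f(s,x,y) − (1−ν/λ)·f(s, x, y−ℏ[ν]). Then for every n ≥ 1 there exist functions r_{n,1}, …, r_{n,n} of (s, x, y), independent of λ, such that for all nonzero λ simultaneously: (Y_ν)ⁿw̃⁺(s,x,y;λ) = Σ_{k=1}^{n} r_{n,k}(s,x,y)·λ^{−k}·w̃⁺(s−kℏ, x, y; λ) and (Y_{ν,λ})ⁿw̃⁻(s,x,y;λ) = Σ_{k=1}^{n} r_{n,k}(s,x,y)·λ^{−k}·w̃⁻(s−kℏ, x, y; λ), with the same coefficient functions r_{n,k} in both relations. -/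
noncomputable section

/-- The untwisted difference operator `Y_ν`. -/
def Yun (h ν : ℂ) (g : ℂ → (ℕ+ → ℂ) → (ℕ+ → ℂ) → ℂ) :
    ℂ → (ℕ+ → ℂ) → (ℕ+ → ℂ) → ℂ :=
  fun s x y => g s x y - g s x (shift h y ν)

/-- The twisted difference operator `Y_{ν,λ}`. -/
def Ytw (h ν lam : ℂ) (f : ℂ → (ℕ+ → ℂ) → (ℕ+ → ℂ) → ℂ) :
    ℂ → (ℕ+ → ℂ) → (ℕ+ → ℂ) → ℂ :=
  fun s x y => f s x y - (1 - ν / lam) * f s x (shift h y ν)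

/-! Both `w̃⁺` and `w̃⁻` satisfy the same first-order relation in `y`,
`c · w(s, x, y − ℏ[ν]) = w(s, x, y) − λ⁻¹ · v⁻(s, x, y; ν) · w(s − ℏ, x, y)`,
with `c = 1` for `w̃⁺` (this is identity (C)) and `c = 1 − ν/λ` for `w̃⁻` (identity (B)).
Applying `g ↦ g − c · g(y − ℏ[ν])` to a term `r · λ⁻ᵏ · w(s − kℏ)` and using the relation
at `s − kℏ`, the constant `c` cancels: the result is
`(r − r(y − ℏ[ν])) · λ⁻ᵏ · w(s − kℏ) + r(y − ℏ[ν]) · v⁻(s − kℏ) · λ⁻ᵏ⁻¹ · w(s − (k+1)ℏ)`.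
Hence the coefficients of the `n`-th iterate obey a recursion involving only `v⁻`,
the same for both functions and independent of `λ`. -/

lemma sum_range_succ_eq_sum_Icc {M : Type*} [AddCommMonoid M] (f : ℕ → M) (hf : f 0 = 0)
    (n : ℕ) : ∑ k ∈ Finset.range (n + 1), f k = ∑ k ∈ Finset.Icc 1 n, f k := by
  rw [Finset.sum_range_succ', hf, add_zero, ← Finset.Ico_add_one_right_eq_Icc,
    Finset.sum_Ico_eq_sum_range, Nat.add_sub_cancel]
  simp only [add_comm 1]

lemma shift_comm (h : ℂ) (y : ℕ+ → ℂ) (a b : ℂ) :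
    shift h (shift h y a) b = shift h (shift h y b) a := by
  funext n
  simp only [shift]
  ring

lemma wtp_shift (h : ℂ) (τ : ℂ → (ℕ+ → ℂ) → (ℕ+ → ℂ) → ℂ) (hτ : ∀ s x y, τ s x y ≠ 0)
    (hC : FayC h τ) {ν lam : ℂ} (hν : ν ≠ 0) (hlam : lam ≠ 0) (s : ℂ) (x y : ℕ+ → ℂ) :
    wtp h τ s x (shift h y ν) lam
      = wtp h τ s x y lam - vm h τ s x y ν * lam⁻¹ * wtp h τ (s - h) x y lam := by
  have := hτ s x y
  have := hτ s x (shift h y ν)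
  have := hτ (s - h) x y
  have hc := hC s x y lam ν hlam hν
  simp only [wtp, vm]
  generalize shift h x lam⁻¹ = x' at hc ⊢
  field_simp
  linear_combination -hc

lemma wtm_shift (h : ℂ) (τ : ℂ → (ℕ+ → ℂ) → (ℕ+ → ℂ) → ℂ) (hτ : ∀ s x y, τ s x y ≠ 0)
    (hB : FayB h τ) {ν lam : ℂ} (hν : ν ≠ 0) (hlam : lam ≠ 0) (s : ℂ) (x y : ℕ+ → ℂ) :
    (1 - ν / lam) * wtm h τ s x (shift h y ν) lam
      = wtm h τ s x y lam - vm h τ s x y ν * lam⁻¹ * wtm h τ (s - h) x y lam := by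
  have := hτ s x y
  have := hτ s x (shift h y ν)
  have := hτ (s - h) x y
  simp only [wtm, vm]
  rw [shift_comm, sub_add_cancel]
  field_simp
  linear_combination hB s x y lam ν hlam hν

section Expansion

variable {X Y : Type*}

def twistedDiff (σ : Y → Y) (c : ℂ) (g : ℂ → X → Y → ℂ) : ℂ → X → Y → ℂ :=
  fun s x y => g s x y - c * g s x (σ y)

lemma Yun_eq_twistedDiff (h ν : ℂ) : Yun h ν = twistedDiff (shift h · ν) 1 := by
  funext g s x y
  simp [Yun, twistedDiff]

lemma Ytw_eq_twistedDiff (h ν lam : ℂ) :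
    Ytw h ν lam = twistedDiff (shift h · ν) (1 - ν / lam) :=
  rfl

def expansionCoeff (σ : Y → Y) (h : ℂ) (V : ℂ → X → Y → ℂ) : ℕ → ℕ → ℂ → X → Y → ℂ
  | 0, 0, _, _, _ => 1
  | 0, _ + 1, _, _, _ => 0
  | n + 1, 0, s, x, y => expansionCoeff σ h V n 0 s x y - expansionCoeff σ h V n 0 s x (σ y)
  | n + 1, k + 1, s, x, y =>
      expansionCoeff σ h V n (k + 1) s x y - expansionCoeff σ h V n (k + 1) s x (σ y)
        + expansionCoeff σ h V n k s x (σ y) * V (s - k * h) x y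

variable (σ : Y → Y) (h : ℂ) (V : ℂ → X → Y → ℂ)

lemma expansionCoeff_eq_zero_of_lt {n k : ℕ} (hnk : n < k) (s : ℂ) (x : X) (y : Y) :
    expansionCoeff σ h V n k s x y = 0 := by
  induction n generalizing k s x y with
  | zero =>
    obtain ⟨k, rfl⟩ := Nat.exists_eq_add_one_of_ne_zero hnk.ne'
    rfl
  | succ n ih =>
    obtain ⟨k, rfl⟩ := Nat.exists_eq_add_one_of_ne_zero (Nat.ne_zero_of_lt hnk)
    simp only [expansionCoeff, ih (by omega : n < k + 1), ih (by omega : n < k)]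
    ring

lemma expansionCoeff_zero {n : ℕ} (hn : 1 ≤ n) (s : ℂ) (x : X) (y : Y) :
    expansionCoeff σ h V n 0 s x y = 0 := by
  induction n, hn using Nat.le_induction generalizing s x y with
  | base => simp [expansionCoeff]
  | succ n _ ih => simp [expansionCoeff, ih]

lemma iterate_twistedDiff_eq_sum {c lam : ℂ} {w : ℂ → X → Y → ℂ}
    (hw : ∀ s x y, c * w s x (σ y) = w s x y - V s x y * lam⁻¹ * w (s - h) x y)
    (n : ℕ) (s : ℂ) (x : X) (y : Y) :
    (twistedDiff σ c)^[n] w s x y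
      = ∑ k ∈ Finset.range (n + 1),
          expansionCoeff σ h V n k s x y * lam⁻¹ ^ k * w (s - k * h) x y := by
  induction n generalizing s x y with
  | zero => simp [expansionCoeff]
  | succ n ih =>
    set R := expansionCoeff σ h V
    set d : ℕ → ℂ := fun k => (R n k s x y - R n k s x (σ y)) * lam⁻¹ ^ k * w (s - k * h) x y
    set e : ℕ → ℂ := fun k =>
      R n k s x (σ y) * V (s - k * h) x y * lam⁻¹ ^ (k + 1) * w (s - (k + 1 : ℕ) * h) x y
    have hterm : ∀ k, R n k s x y * lam⁻¹ ^ k * w (s - k * h) x y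
        - c * (R n k s x (σ y) * lam⁻¹ ^ k * w (s - k * h) x (σ y)) = d k + e k := by
      intro k
      simp only [d, e, Nat.cast_succ, add_mul, one_mul, ← sub_sub]
      linear_combination (-R n k s x (σ y) * lam⁻¹ ^ k) * hw (s - k * h) x y
    have htop : d (n + 1) = 0 := by
      simp [d, R, expansionCoeff_eq_zero_of_lt σ h V (Nat.lt_succ_self n)]
    have hsucc : ∀ k, R (n + 1) (k + 1) s x y * lam⁻¹ ^ (k + 1) * w (s - (k + 1 : ℕ) * h) x y
        = d (k + 1) + e k := by
      intro k
      simp only [d, e, R, expansionCoeff]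
      ring
    have hzero : R (n + 1) 0 s x y * lam⁻¹ ^ 0 * w (s - (0 : ℕ) * h) x y = d 0 := by
      simp only [d, R, expansionCoeff]
    calc (twistedDiff σ c)^[n + 1] w s x y
        = ∑ k ∈ Finset.range (n + 1), (d k + e k) := by
          rw [Function.iterate_succ_apply', twistedDiff, ih, ih, Finset.mul_sum,
            ← Finset.sum_sub_distrib]
          exact Finset.sum_congr rfl fun k _ => hterm k
      _ = ∑ k ∈ Finset.range (n + 1), (d (k + 1) + e k) + d 0 := by
          rw [Finset.sum_add_distrib, Finset.sum_add_distrib, ← add_zero (∑ k ∈ _, d k),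
            ← htop, ← Finset.sum_range_succ, Finset.sum_range_succ']
          ring
      _ = _ := by
          rw [Finset.sum_range_succ' _ (n + 1), hzero]
          simp only [hsucc]

end Expansion

theorem fay_implies_iterated_Y_expansion_general
    (h : ℂ)
    (τ : ℂ → (ℕ+ → ℂ) → (ℕ+ → ℂ) → ℂ) (hτ : ∀ s x y, τ s x y ≠ 0)
    (hB : FayB h τ) (hC : FayC h τ)
    (ν : ℂ) (hν : ν ≠ 0) (n : ℕ) (hn : 1 ≤ n) :
    ∃ r : ℕ → ℂ → (ℕ+ → ℂ) → (ℕ+ → ℂ) → ℂ,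
      ∀ lam : ℂ, lam ≠ 0 → ∀ (s : ℂ) (x y : ℕ+ → ℂ),
        ((Yun h ν)^[n] (fun s x y => wtp h τ s x y lam) s x y
            = ∑ k ∈ Finset.Icc 1 n,
                r k s x y * lam⁻¹ ^ k * wtp h τ (s - (k : ℂ) * h) x y lam)
        ∧ ((Ytw h ν lam)^[n] (fun s x y => wtm h τ s x y lam) s x y
            = ∑ k ∈ Finset.Icc 1 n,
                r k s x y * lam⁻¹ ^ k * wtm h τ (s - (k : ℂ) * h) x y lam) := by
  set σ : (ℕ+ → ℂ) → (ℕ+ → ℂ) := (shift h · ν)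
  set V := fun s x y => vm h τ s x y ν
  refine ⟨expansionCoeff σ h V n, fun lam hlam s x y => ⟨?_, ?_⟩⟩
  · rw [Yun_eq_twistedDiff, iterate_twistedDiff_eq_sum σ h V
      (fun s x y => by rw [one_mul]; exact wtp_shift h τ hτ hC hν hlam s x y),
      sum_range_succ_eq_sum_Icc _ (by simp [expansionCoeff_zero σ h V hn])]
  · rw [Ytw_eq_twistedDiff, iterate_twistedDiff_eq_sum σ h V (wtm_shift h τ hτ hB hν hlam),
      sum_range_succ_eq_sum_Icc _ (by simp [expansionCoeff_zero σ h V hn])]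

/-- Expansion of `Y[ν]ⁿ` applied to `w̃⁺` and `w̃⁻`, with common coefficients. -/
theorem fay_implies_iterated_Y_expansion
    (h : ℂ) (hh : h ≠ 0)
    (τ : ℂ → (ℕ+ → ℂ) → (ℕ+ → ℂ) → ℂ) (hτ : ∀ s x y, τ s x y ≠ 0)
    (hB : FayB h τ) (hC : FayC h τ)
    (ν : ℂ) (hν : ν ≠ 0) (n : ℕ) (hn : 1 ≤ n) :
    ∃ r : ℕ → ℂ → (ℕ+ → ℂ) → (ℕ+ → ℂ) → ℂ,
      ∀ lam : ℂ, lam ≠ 0 → ∀ (s : ℂ) (x y : ℕ+ → ℂ),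
        ((Yun h ν)^[n] (fun s x y => wtp h τ s x y lam) s x y
            = ∑ k ∈ Finset.Icc 1 n,
                r k s x y * lam⁻¹ ^ k * wtp h τ (s - (k : ℂ) * h) x y lam)
        ∧ ((Ytw h ν lam)^[n] (fun s x y => wtm h τ s x y lam) s x y
            = ∑ k ∈ Finset.Icc 1 n,
                r k s x y * lam⁻¹ ^ k * wtm h τ (s - (k : ℂ) * h) x y lam) :=
  fay_implies_iterated_Y_expansion_general h τ hτ hB hC ν hν n hn
end
end
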